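/- In a deterministic finite episodic MDP (deterministic transitions and rewards, but stochastic policy), if Q̃^{π_θ} = Q^{π_θ} exactly and ∇_θ Q̃^{π_θ} = ∇_θ Q^{π_θ} exactly, then the DR-PG estimator is deterministic: its covariance matrix is the zero matrix, i.e., it equals ∇_θ J(π_θ) with probability 1. -/

import Mathlib

open Finset

variable {S A : Type} [Fintype S] [Fintype A]

/-- state sequence of a deterministic MDP: `s₀` fixed, `s_{t+1} = P(s_t, a_t)`. -/
def detSt (T : ℕ) (Pd : S → A → S) (s0 : S) (acts : Fin (T + 1) → A) : ℕ → S
  | 0 => s0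
  | t + 1 => Pd (detSt T Pd s0 acts t) (acts ⟨min t T, by omega⟩)

/-- action at time `t` (index clamped). -/
def detAc (T : ℕ) (acts : Fin (T + 1) → A) (t : ℕ) : A := acts ⟨min t T, by omega⟩

/-- true state-value function `V^π` of the deterministic MDP at time `t`. -/
def detV (T : ℕ) (γ : ℝ) (Pd : S → A → S) (rf : S → A → ℝ) (π : S → A → ℝ) :
    ℕ → S → ℝ := fun t s =>
  if _h : T + 1 ≤ t then 0
  else ∑ a, π s a * (rf s a + γ * detV T γ Pd rf π (t + 1) (Pd s a))
  termination_by t => T + 1 - t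
  decreasing_by omega

/-- true Q-value function `Q^π` of the deterministic MDP at time `t`. -/
def detQ (T : ℕ) (γ : ℝ) (Pd : S → A → S) (rf : S → A → ℝ) (π : S → A → ℝ)
    (t : ℕ) (s : S) (a : A) : ℝ :=
  rf s a + γ * detV T γ Pd rf π (t + 1) (Pd s a)

/-- probability of an action sequence under policy `π`. -/
def detProb (T : ℕ) (Pd : S → A → S) (s0 : S) (π : S → A → ℝ)
    (acts : Fin (T + 1) → A) : ℝ :=
  ∏ t ∈ range (T + 1), π (detSt T Pd s0 acts t) (detAc T acts t)

/-- the DR-PG estimator for the deterministic MDP, with the accurate side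
information `Q̃^{π_θ} = Q^{π_θ}` and `∇_θ Q̃^{π_θ} = ∇_θ Q^{π_θ}` (so that also
`Ṽ^{π_θ} = V^{π_θ}`). -/
noncomputable def detDRPG {d : ℕ} (T : ℕ) (γ : ℝ) (Pd : S → A → S) (rf : S → A → ℝ)
    (s0 : S) (θ : Fin d → ℝ) (πf : (Fin d → ℝ) → S → A → ℝ)
    (acts : Fin (T + 1) → A) : Fin d → ℝ := fun i =>
  ∑ t ∈ range (T + 1),
    (((∑ t1 ∈ Finset.Icc t T, γ ^ t1 *
          rf (detSt T Pd s0 acts t1) (detAc T acts t1))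
      + ∑ t2 ∈ Finset.Icc (t + 1) T, γ ^ t2 *
          (detV T γ Pd rf (πf θ) t2 (detSt T Pd s0 acts t2)
            - detQ T γ Pd rf (πf θ) t2 (detSt T Pd s0 acts t2) (detAc T acts t2)))
      * fderiv ℝ (fun θ' => Real.log (πf θ' (detSt T Pd s0 acts t) (detAc T acts t))) θ
          (Pi.single i 1)
    + γ ^ t *
        (fderiv ℝ (fun θ' => detV T γ Pd rf (πf θ') t (detSt T Pd s0 acts t)) θ
            (Pi.single i 1)
          - fderiv ℝ (fun θ' =>
              detQ T γ Pd rf (πf θ') t (detSt T Pd s0 acts t) (detAc T acts t)) θ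
              (Pi.single i 1)
          - detQ T γ Pd rf (πf θ) t (detSt T Pd s0 acts t) (detAc T acts t) *
              fderiv ℝ (fun θ' =>
                  Real.log (πf θ' (detSt T Pd s0 acts t) (detAc T acts t))) θ
                (Pi.single i 1)))

/-- (unconditional) covariance matrix over a finite sample space. -/
noncomputable def covMat {Ω : Type} [Fintype Ω] {d : ℕ} (p : Ω → ℝ) (Z : Ω → Fin d → ℝ) :
    Matrix (Fin d) (Fin d) ℝ := fun i j =>
  (∑ ω, p ω * (Z ω i * Z ω j)) - (∑ ω, p ω * Z ω i) * (∑ ω, p ω * Z ω j)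

/-!
With the exact `Q^{π_θ}` and `∇_θ Q^{π_θ}` as side information, the factor multiplying the score
`∇ log π_θ(a_t | s_t)` (the reward-to-go plus the corrections `γ^k (V_k - Q_k)`, `k > t`)
telescopes to `γ^t Q_t(s_t, a_t)` and cancels the control-variate term. Since transitions and
rewards are deterministic, `∇_θ Q_t(s, a) = γ ∇_θ V_{t+1}(P(s, a))`, so the `t`-th summand is
`γ^t ∇V_t(s_t) - γ^{t+1} ∇V_{t+1}(s_{t+1})` and the estimator telescopes to
`∇_θ V_0(s_0) = ∇_θ J(π_θ)` along every trajectory. A constant vector has zero covariance.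
-/

section

variable {S A : Type}

def detReturn (T : ℕ) (γ : ℝ) (Pd : S → A → S) (rf : S → A → ℝ) (s0 : S)
    (acts : Fin (T + 1) → A) : ℝ :=
  ∑ t ∈ range (T + 1), γ ^ t * rf (detSt T Pd s0 acts t) (detAc T acts t)

lemma detAc_cons_zero {T : ℕ} (a : A) (rest : Fin T → A) :
    detAc T (Fin.cons a rest : Fin (T + 1) → A) 0 = a := rfl

lemma detAc_cons_succ {T : ℕ} (a : A) (rest : Fin (T + 1) → A) (u : ℕ) :
    detAc (T + 1) (Fin.cons a rest : Fin (T + 2) → A) (u + 1) = detAc T rest u := by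
  simp only [detAc, Nat.succ_min_succ]
  exact Fin.cons_succ (α := fun _ => A) a rest ⟨min u T, by omega⟩

lemma detSt_succ {T : ℕ} (Pd : S → A → S) (s0 : S) (acts : Fin (T + 1) → A) (t : ℕ) :
    detSt T Pd s0 acts (t + 1) = Pd (detSt T Pd s0 acts t) (detAc T acts t) := rfl

lemma detSt_cons_succ {T : ℕ} (Pd : S → A → S) (s0 : S) (a : A) (rest : Fin (T + 1) → A)
    (u : ℕ) : detSt (T + 1) Pd s0 (Fin.cons a rest) (u + 1) = detSt T Pd (Pd s0 a) rest u := by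
  induction u with
  | zero => rfl
  | succ u ih => exact congrArg₂ Pd ih (detAc_cons_succ a rest u)

lemma detReturn_cons {T : ℕ} (γ : ℝ) (Pd : S → A → S) (rf : S → A → ℝ) (s0 : S) (a : A)
    (rest : Fin (T + 1) → A) :
    detReturn (T + 1) γ Pd rf s0 (Fin.cons a rest)
      = rf s0 a + γ * detReturn T γ Pd rf (Pd s0 a) rest := by
  simp only [detReturn, sum_range_succ' _ (T + 1), mul_sum, detSt_cons_succ, detAc_cons_succ]
  rw [add_comm, pow_zero, one_mul]
  congr 1
  exact sum_congr rfl fun u _ => by ring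

lemma detProb_cons {T : ℕ} (Pd : S → A → S) (s0 : S) (π : S → A → ℝ) (a : A)
    (rest : Fin (T + 1) → A) :
    detProb (T + 1) Pd s0 π (Fin.cons a rest) = π s0 a * detProb T Pd (Pd s0 a) π rest := by
  simp only [detProb, prod_range_succ' _ (T + 1), detSt_cons_succ, detAc_cons_succ]
  exact mul_comm _ _

lemma sum_pi_fin_succ_eq_sum_sum_cons [Fintype A] {M : Type*} [AddCommMonoid M] (n : ℕ)
    (F : (Fin (n + 1) → A) → M) :
    ∑ f, F f = ∑ a, ∑ g : Fin n → A, F (Fin.cons a g) := by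
  rw [← (Fin.consEquiv fun _ => A).sum_comp, Fintype.sum_prod_type]
  rfl

variable [Fintype A] {T : ℕ} {γ : ℝ} {Pd : S → A → S} {rf : S → A → ℝ} {π : S → A → ℝ}

lemma detV_of_lt {t : ℕ} (h : T < t) (s : S) : detV T γ Pd rf π t s = 0 := by
  rw [detV, dif_pos (show T + 1 ≤ t from h)]

lemma detV_eq_sum_mul_detQ {t : ℕ} (h : t ≤ T) (s : S) :
    detV T γ Pd rf π t s = ∑ a, π s a * detQ T γ Pd rf π t s a := by
  rw [detV, dif_neg (by omega)]
  rfl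

lemma detQ_of_le {t : ℕ} (h : T ≤ t) (s : S) (a : A) : detQ T γ Pd rf π t s a = rf s a := by
  rw [detQ, detV_of_lt (by omega), mul_zero, add_zero]

lemma detV_succ_succ (t : ℕ) (s : S) :
    detV (T + 1) γ Pd rf π (t + 1) s = detV T γ Pd rf π t s := by
  rcases le_or_gt t T with h | h
  · rw [detV_eq_sum_mul_detQ (by omega), detV_eq_sum_mul_detQ h]
    refine sum_congr rfl fun a _ => ?_
    rw [detQ, detQ, detV_succ_succ (t + 1)]
  · rw [detV_of_lt (by omega), detV_of_lt h]
termination_by T + 1 - t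

lemma sum_detProb_eq_one (hπ : ∀ s, ∑ a, π s a = 1) (s0 : S) :
    ∑ acts, detProb T Pd s0 π acts = 1 := by
  induction T generalizing s0 with
  | zero =>
    simp [sum_pi_fin_succ_eq_sum_sum_cons, detProb, detSt, detAc_cons_zero, hπ]
  | succ T ih =>
    simp only [sum_pi_fin_succ_eq_sum_sum_cons (T + 1), detProb_cons, ← mul_sum, ih, mul_one, hπ]

lemma detV_zero_eq_sum_detProb_mul_detReturn (hπ : ∀ s, ∑ a, π s a = 1) (s0 : S) :
    detV T γ Pd rf π 0 s0 = ∑ acts, detProb T Pd s0 π acts * detReturn T γ Pd rf s0 acts := by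
  induction T generalizing s0 with
  | zero =>
    simp [sum_pi_fin_succ_eq_sum_sum_cons, detV_eq_sum_mul_detQ, detQ_of_le, detProb, detReturn,
      detSt, detAc_cons_zero]
  | succ T ih =>
    rw [detV_eq_sum_mul_detQ (Nat.zero_le _), sum_pi_fin_succ_eq_sum_sum_cons (T + 1)]
    refine sum_congr rfl fun a _ => ?_
    simp only [detProb_cons, detReturn_cons, mul_assoc, ← mul_sum]
    rw [detQ, detV_succ_succ, ih]
    congr 1
    simp only [mul_add, sum_add_distrib, ← sum_mul, sum_detProb_eq_one hπ, one_mul, mul_sum,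
      mul_left_comm]

lemma sum_reward_add_sum_detV_sub_detQ (s0 : S) (acts : Fin (T + 1) → A) {t : ℕ} (ht : t ≤ T) :
    (∑ t1 ∈ Icc t T, γ ^ t1 * rf (detSt T Pd s0 acts t1) (detAc T acts t1))
      + ∑ t2 ∈ Icc (t + 1) T, γ ^ t2 *
          (detV T γ Pd rf π t2 (detSt T Pd s0 acts t2)
            - detQ T γ Pd rf π t2 (detSt T Pd s0 acts t2) (detAc T acts t2))
      = γ ^ t * detQ T γ Pd rf π t (detSt T Pd s0 acts t) (detAc T acts t) := by
  rcases ht.eq_or_lt with rfl | hlt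
  · rw [Icc_self, Icc_eq_empty (by omega), sum_singleton, sum_empty, add_zero, detQ_of_le le_rfl]
  · have ih := sum_reward_add_sum_detV_sub_detQ s0 acts (show t + 1 ≤ T from hlt)
    have hQ : detQ T γ Pd rf π t (detSt T Pd s0 acts t) (detAc T acts t)
        = rf (detSt T Pd s0 acts t) (detAc T acts t)
          + γ * detV T γ Pd rf π (t + 1) (detSt T Pd s0 acts (t + 1)) := by
      rw [detQ, detSt_succ]
    rw [← add_sum_Ioc_eq_sum_Icc (show t + 1 ≤ T from hlt), ← add_sum_Ioc_eq_sum_Icc ht, hQ]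
    simp only [← Icc_add_one_left_eq_Ioc]
    linear_combination ih
termination_by T - t

section Gradient

variable {E : Type*} [NormedAddCommGroup E] [NormedSpace ℝ E] {πf : E → S → A → ℝ}

lemma differentiable_detV (hdiff : ∀ s a, Differentiable ℝ fun θ => πf θ s a) (t : ℕ) (s : S) :
    Differentiable ℝ fun θ => detV T γ Pd rf (πf θ) t s := by
  rcases le_or_gt t T with h | h
  · simp only [detV_eq_sum_mul_detQ h, detQ]
    exact Differentiable.fun_sum fun a _ => (hdiff s a).mul <|
      (differentiable_const _).add <| (differentiable_const _).mul <|
        differentiable_detV hdiff (t + 1) (Pd s a)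
  · simp only [detV_of_lt h]
    exact differentiable_const 0
termination_by T + 1 - t

lemma fderiv_detV_of_lt {t : ℕ} (h : T < t) (s : S) (θ : E) :
    fderiv ℝ (fun θ => detV T γ Pd rf (πf θ) t s) θ = 0 := by
  simp only [detV_of_lt h, fderiv_const_apply]

lemma fderiv_detQ (hdiff : ∀ s a, Differentiable ℝ fun θ => πf θ s a) (t : ℕ) (s : S) (a : A)
    (θ : E) :
    fderiv ℝ (fun θ => detQ T γ Pd rf (πf θ) t s a) θ
      = γ • fderiv ℝ (fun θ => detV T γ Pd rf (πf θ) (t + 1) (Pd s a)) θ := by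
  simp only [detQ]
  rw [fderiv_const_add, fderiv_const_mul (differentiable_detV hdiff (t + 1) (Pd s a) θ)]

end Gradient

lemma detDRPG_apply_eq_fderiv_detV {d : ℕ} (s0 : S) (θ : Fin d → ℝ)
    {πf : (Fin d → ℝ) → S → A → ℝ} (hdiff : ∀ s a, Differentiable ℝ fun θ => πf θ s a)
    (acts : Fin (T + 1) → A) (i : Fin d) :
    detDRPG T γ Pd rf s0 θ πf acts i
      = fderiv ℝ (fun θ' => detV T γ Pd rf (πf θ') 0 s0) θ (Pi.single i 1) := by
  set g : ℕ → ℝ := fun t => γ ^ t *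
    fderiv ℝ (fun θ' => detV T γ Pd rf (πf θ') t (detSt T Pd s0 acts t)) θ (Pi.single i 1)
  calc detDRPG T γ Pd rf s0 θ πf acts i = ∑ t ∈ range (T + 1), (g t - g (t + 1)) := by
        refine sum_congr rfl fun t ht => ?_
        rw [sum_reward_add_sum_detV_sub_detQ s0 acts (Nat.lt_succ_iff.mp (mem_range.mp ht)),
          fderiv_detQ hdiff]
        simp only [g, detSt_succ, smul_apply, smul_eq_mul, pow_succ]
        ring
    _ = g 0 - g (T + 1) := sum_range_sub' g (T + 1)
    _ = _ := by simp [g, fderiv_detV_of_lt (Nat.lt_succ_self T), detSt]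

end

lemma covMat_eq_zero_of_forall_eq {Ω : Type} [Fintype Ω] {d : ℕ} {p : Ω → ℝ}
    {Z : Ω → Fin d → ℝ} (hp : ∑ ω, p ω = 1) (z : Fin d → ℝ) (hZ : ∀ ω, Z ω = z) :
    covMat p Z = 0 := by
  ext i j
  simp only [covMat, hZ, ← sum_mul, hp, one_mul, sub_self, Matrix.zero_apply]

theorem drpg_deterministic_mdp_zero_variance_general (T : ℕ) (γ : ℝ)
    (Pd : S → A → S) (rf : S → A → ℝ) (s0 : S)
    {d : ℕ} (θ : Fin d → ℝ) (πf : (Fin d → ℝ) → S → A → ℝ)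
    (hpol : ∀ θ' s, (∀ a, 0 ≤ πf θ' s a) ∧ ∑ a, πf θ' s a = 1)
    (hdiff : ∀ s a, Differentiable ℝ (fun θ' => πf θ' s a)) :
    covMat (detProb T Pd s0 (πf θ)) (detDRPG T γ Pd rf s0 θ πf) = 0
    ∧ ∀ acts : Fin (T + 1) → A, ∀ i,
        detDRPG T γ Pd rf s0 θ πf acts i
          = fderiv ℝ (fun θ' => ∑ acts' : Fin (T + 1) → A,
              detProb T Pd s0 (πf θ') acts' *
                ∑ t ∈ range (T + 1), γ ^ t *
                  rf (detSt T Pd s0 acts' t) (detAc T acts' t)) θ (Pi.single i 1) := by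
  have hπ : ∀ θ' s, ∑ a, πf θ' s a = 1 := fun θ' s => (hpol θ' s).2
  have hconst : ∀ acts : Fin (T + 1) → A, ∀ i,
      detDRPG T γ Pd rf s0 θ πf acts i
        = fderiv ℝ (fun θ' => detV T γ Pd rf (πf θ') 0 s0) θ (Pi.single i 1) :=
    detDRPG_apply_eq_fderiv_detV s0 θ hdiff
  simp only [detV_zero_eq_sum_detProb_mul_detReturn (hπ _)] at hconst
  exact ⟨covMat_eq_zero_of_forall_eq (sum_detProb_eq_one (hπ θ) s0) _
    fun acts => funext (hconst acts), hconst⟩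

/-- in a deterministic finite episodic MDP (deterministic
transitions `Pd` and rewards `rf`, stochastic policy `π_θ`), if the
approximate Q-function and its θ-gradient are exact, the DR-PG estimator is
deterministic: its covariance matrix is zero, i.e. it equals
`∇_θ J(π_θ)` with probability 1 (here: for every action sequence). -/
theorem drpg_deterministic_mdp_zero_variance (T : ℕ) (γ : ℝ)
    (Pd : S → A → S) (rf : S → A → ℝ) (s0 : S)
    {d : ℕ} (θ : Fin d → ℝ) (πf : (Fin d → ℝ) → S → A → ℝ)
    (hpol : ∀ θ' s, (∀ a, 0 ≤ πf θ' s a) ∧ ∑ a, πf θ' s a = 1)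
    (hpos : ∀ θ' s a, 0 < πf θ' s a)
    (hdiff : ∀ s a, Differentiable ℝ (fun θ' => πf θ' s a)) :
    covMat (detProb T Pd s0 (πf θ)) (detDRPG T γ Pd rf s0 θ πf) = 0
    ∧ ∀ acts : Fin (T + 1) → A, ∀ i,
        detDRPG T γ Pd rf s0 θ πf acts i
          = fderiv ℝ (fun θ' => ∑ acts' : Fin (T + 1) → A,
              detProb T Pd s0 (πf θ') acts' *
                ∑ t ∈ range (T + 1), γ ^ t *
                  rf (detSt T Pd s0 acts' t) (detAc T acts' t)) θ (Pi.single i 1) :=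
  drpg_deterministic_mdp_zero_variance_general T γ Pd rf s0 θ πf hpol hdiff
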